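/- Let n ≥ 4 with n ≡ 0 (mod 4), let Θ̂ be a real number with (n−2)·π/2 < Θ̂ < n·π/2, and let μ₁, …, μ_{n−1} be real numbers with Σ_{k=1}^{n−1} arctan(μ_k) > Θ̂ − π/2. Then the complex number z := ∏_{k=1}^{n−1} (1 + i·μ_k) satisfies Im(z) + cot(Θ̂)·Re(z) < 0. -/

import Mathlib

/-!
Each factor has the polar form `1 + iμ = √(1 + μ²) · e^{i arctan μ}`, so `z = R e^{iS}` with
`R > 0` and `S = Σ arctan μ_k`. Then `Im z + cot Θ̂ · Re z = R cos (S - Θ̂) / sin Θ̂`.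
Writing `n = 4m`, the angle `Θ̂` lies in `(2mπ - π, 2mπ)`, so `sin Θ̂ < 0`; and since every
`arctan μ_k < π/2`, the hypothesis on `S` puts `S - Θ̂` in `(-π/2, π/2)`, so `cos (S - Θ̂) > 0`.
-/

open Real

lemma Complex.one_add_I_mul_ofReal_eq_polar (x : ℝ) :
    1 + Complex.I * x = (√(1 + x ^ 2) : ℂ) * Complex.exp (Real.arctan x * Complex.I) := by
  have hsqrt : (√(1 + x ^ 2) : ℂ) ≠ 0 := by exact_mod_cast (by positivity : √(1 + x ^ 2) ≠ 0)
  rw [Complex.exp_mul_I, ← Complex.ofReal_cos, ← Complex.ofReal_sin, Real.cos_arctan,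
    Real.sin_arctan]
  push_cast
  field_simp

lemma Complex.prod_one_add_I_mul_ofReal_eq_polar {ι : Type*} (s : Finset ι) (μ : ι → ℝ) :
    ∏ k ∈ s, (1 + Complex.I * μ k) =
      ((∏ k ∈ s, √(1 + μ k ^ 2) : ℝ) : ℂ) *
        Complex.exp ((∑ k ∈ s, Real.arctan (μ k) : ℝ) * Complex.I) := by
  simp only [one_add_I_mul_ofReal_eq_polar, Finset.prod_mul_distrib, Complex.ofReal_prod,
    Complex.ofReal_sum, Finset.sum_mul, Complex.exp_sum]

lemma Complex.im_add_cot_mul_re_polar (R S θ : ℝ) (hθ : Real.sin θ ≠ 0) :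
    ((R : ℂ) * Complex.exp (S * Complex.I)).im +
        Real.cos θ / Real.sin θ * ((R : ℂ) * Complex.exp (S * Complex.I)).re =
      R * Real.cos (S - θ) / Real.sin θ := by
  simp only [Complex.re_ofReal_mul, Complex.im_ofReal_mul, Complex.exp_ofReal_mul_I_re,
    Complex.exp_ofReal_mul_I_im, Real.cos_sub]
  field_simp
  ring

lemma Real.sin_neg_of_mem_Ioo_two_mul_int_mul_pi {θ : ℝ} (m : ℤ)
    (hlo : 2 * m * π - π < θ) (hhi : θ < 2 * m * π) : sin θ < 0 := by
  rw [← sin_sub_int_mul_two_pi θ m]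
  exact sin_neg_of_neg_of_neg_pi_lt (by linarith) (by linarith)

lemma Real.sum_arctan_lt {ι : Type*} {s : Finset ι} (hs : s.Nonempty) (μ : ι → ℝ) :
    ∑ k ∈ s, arctan (μ k) < s.card * (π / 2) := by
  calc ∑ k ∈ s, arctan (μ k) < ∑ _k ∈ s, π / 2 :=
        Finset.sum_lt_sum_of_nonempty hs fun k _ => arctan_lt_pi_div_two (μ k)
    _ = s.card * (π / 2) := by rw [Finset.sum_const, nsmul_eq_mul]

theorem stmt_13 (n : ℕ) (hn : 4 ≤ n) (hmod : n % 4 = 0) (Θhat : ℝ)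
    (h1 : ((n : ℝ) - 2) * (π / 2) < Θhat) (h2 : Θhat < (n : ℝ) * (π / 2))
    (μ : Fin (n - 1) → ℝ)
    (hμ : Θhat - π / 2 < ∑ k, Real.arctan (μ k)) :
    (∏ k, (1 + Complex.I * (μ k : ℂ))).im +
        (Real.cos Θhat / Real.sin Θhat) * (∏ k, (1 + Complex.I * (μ k : ℂ))).re < 0 := by
  obtain ⟨m, rfl⟩ : ∃ m : ℕ, n = 4 * m := ⟨n / 4, by omega⟩
  have hsin : sin Θhat < 0 :=
    sin_neg_of_mem_Ioo_two_mul_int_mul_pi m (by push_cast at h1 ⊢; linarith)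
      (by push_cast at h2 ⊢; linarith)
  have hS : ∑ k, arctan (μ k) < ((4 * m : ℕ) - 1 : ℝ) * (π / 2) := by
    have hne : (Finset.univ : Finset (Fin (4 * m - 1))).Nonempty :=
      Finset.univ_nonempty_iff.mpr (Fin.pos_iff_nonempty.mp (by omega))
    have hcard : ((4 * m - 1 : ℕ) : ℝ) = ((4 * m : ℕ) : ℝ) - 1 := by
      rw [Nat.cast_sub (by omega), Nat.cast_one]
    simpa [hcard] using sum_arctan_lt hne μ
  have hcos : 0 < cos (∑ k, arctan (μ k) - Θhat) :=
    cos_pos_of_mem_Ioo ⟨by linarith, by linarith⟩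
  rw [Complex.prod_one_add_I_mul_ofReal_eq_polar, Complex.im_add_cot_mul_re_polar _ _ _ hsin.ne]
  exact div_neg_of_pos_of_neg
    (mul_pos (Finset.prod_pos fun k _ => by positivity) hcos) hsin
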